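/- arXiv:2310.11698 — 3 statements merged into one kernel-verified Lean document; each statement's English description precedes it below -/
import Mathlib

section
/- (Folding Lemma.) Let n ≥ 1 and let a₀, a₁, ..., aₙ, x be complex numbers. Let (p_j, q_j) for -1 ≤ j ≤ n be the continuant sequences of (a₀, a₁, ..., aₙ), and let (P_j, Q_j) for -1 ≤ j ≤ 2n+1 be the continuant sequences of the folded word (b₀, b₁, ..., b_{2n+1}) := (a₀, a₁, ..., aₙ, x, -aₙ, -a_{n-1}, ..., -a₁). Then the identity x·qₙ²·P_{2n+1} = (x·pₙ·qₙ + (-1)ⁿ)·Q_{2n+1} holds. Consequently, if x ≠ 0, qₙ ≠ 0 and Q_{2n+1} ≠ 0, then P_{2n+1}/Q_{2n+1} = pₙ/qₙ + (-1)ⁿ/(x·qₙ²). -/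
open Complex

noncomputable def contNum (a : ℕ → ℂ) : ℕ → ℂ
  | 0 => 1
  | 1 => a 0
  | n + 2 => a (n + 1) * contNum a (n + 1) + contNum a n

noncomputable def contDen (a : ℕ → ℂ) : ℕ → ℂ
  | 0 => 0
  | 1 => 1
  | n + 2 => a (n + 1) * contDen a (n + 1) + contDen a n

lemma contNum_rec (a : ℕ → ℂ) (m : ℕ) :
    contNum a (m+2) = a (m+1) * contNum a (m+1) + contNum a m := rfl

lemma contDen_rec (a : ℕ → ℂ) (m : ℕ) :
    contDen a (m+2) = a (m+1) * contDen a (m+1) + contDen a m := rfl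

lemma det_lemma (a : ℕ → ℂ) : ∀ m,
    contNum a (m+1) * contDen a m - contNum a m * contDen a (m+1) = (-1)^(m+1) := by
  intro m
  induction m with
  | zero => simp [contNum, contDen]
  | succ k ih =>
    rw [contNum_rec, contDen_rec, pow_succ]
    linear_combination (-1 : ℂ) * ih

lemma agree (a b : ℕ → ℂ) (n : ℕ) (h : ∀ j, j ≤ n → b j = a j) :
    ∀ j, j ≤ n + 1 → contNum b j = contNum a j ∧ contDen b j = contDen a j := by
  intro j
  induction j using Nat.strong_induction_on with
  | _ j ih =>
    intro hj
    match j, hj with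
    | 0, _ => simp [contNum, contDen]
    | 1, hj => simp [contNum, contDen, h 0 (by omega)]
    | (m+2), hj =>
      have h1 := ih (m+1) (by omega) (by omega)
      have h0 := ih m (by omega) (by omega)
      have hbm := h (m+1) (by omega)
      rw [contNum_rec, contNum_rec, contDen_rec, contDen_rec, hbm, h1.1, h0.1, h1.2, h0.2]
      exact ⟨rfl, rfl⟩

/-- The Folding Lemma. Here `b` is the folded word
`(a 0, a 1, ..., a n, x, -a n, ..., -a 1)`; `contNum b (2*n+2)` is `P_{2n+1}` and
`contDen b (2*n+2)` is `Q_{2n+1}`, while `contNum a (n+1) = p_n`, `contDen a (n+1) = q_n`. -/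
theorem stmt5 (n : ℕ) (hn : 1 ≤ n) (a : ℕ → ℂ) (x : ℂ) (b : ℕ → ℂ)
    (hb : ∀ j : ℕ, b j =
      if j ≤ n then a j else if j = n + 1 then x else -a (2 * n + 2 - j)) :
    x * contDen a (n + 1) ^ 2 * contNum b (2 * n + 2)
      = (x * contNum a (n + 1) * contDen a (n + 1) + (-1) ^ n) * contDen b (2 * n + 2) ∧
    (x ≠ 0 → contDen a (n + 1) ≠ 0 → contDen b (2 * n + 2) ≠ 0 →
      contNum b (2 * n + 2) / contDen b (2 * n + 2)
        = contNum a (n + 1) / contDen a (n + 1)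
          + (-1) ^ n / (x * contDen a (n + 1) ^ 2)) := by
  set p := contNum a (n+1) with hp
  set q := contDen a (n+1) with hq
  set s : ℂ := (-1)^n with hsdef
  have hs : s * s = 1 := by
    rw [hsdef, ← pow_add, ← two_mul, pow_mul]; norm_num
  have hagree := agree a b n (fun j hj => by rw [hb j]; simp [hj])
  have hbx : b (n+1) = x := by rw [hb (n+1)]; simp
  have hdet : p * contDen a n - contNum a n * q = -s := by
    have := det_lemma a n
    rw [pow_succ] at this
    rw [hp, hq, this, hsdef]; ring
  set A11 : ℂ := x * p^2 with hA11
  set A12 : ℂ := x * p * q + s with hA12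
  set A21 : ℂ := x * p * q - s with hA21
  set A22 : ℂ := x * q^2 with hA22
  have key : ∀ k, k ≤ n →
      (contNum b (n+1+k) = -s * (A11 * contDen a (n+1-k) - A12 * contNum a (n+1-k)) ∧
       contNum b (n+2+k) = -s * (A11 * contDen a (n-k) - A12 * contNum a (n-k)) ∧
       contDen b (n+1+k) = -s * (A21 * contDen a (n+1-k) - A22 * contNum a (n+1-k)) ∧
       contDen b (n+2+k) = -s * (A21 * contDen a (n-k) - A22 * contNum a (n-k))) := by
    intro k
    induction k with
    | zero =>
      intro _
      have e1 : contNum b (n+1) = p := (hagree (n+1) le_rfl).1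
      have e2 : contDen b (n+1) = q := (hagree (n+1) le_rfl).2
      have e3 : contNum b n = contNum a n := (hagree n (by omega)).1
      have e4 : contDen b n = contDen a n := (hagree n (by omega)).2
      have r1 : contNum b (n+2) = x * p + contNum a n := by
        rw [contNum_rec b n, hbx, e1, e3]
      have r2 : contDen b (n+2) = x * q + contDen a n := by
        rw [contDen_rec b n, hbx, e2, e4]
      simp only [Nat.add_zero, Nat.sub_zero, Nat.sub_self]
      refine ⟨?_, ?_, ?_, ?_⟩
      · rw [e1, hA11, hA12]; linear_combination (-p : ℂ) * hs
      · rw [r1, hA11, hA12]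
        linear_combination (s * x * p) * hdet + (-(x*p + contNum a n)) * hs
      · rw [e2, hA21, hA22]; linear_combination (-q : ℂ) * hs
      · rw [r2, hA21, hA22]
        linear_combination (s * x * q) * hdet + (-(x*q + contDen a n)) * hs
    | succ k ih =>
      intro hk1
      obtain ⟨i1, i2, i3, i4⟩ := ih (by omega)
      have hbk : b (n+2+k) = -a (n-k) := by
        rw [hb (n+2+k)]
        have h1 : ¬ (n+2+k ≤ n) := by omega
        have h2 : ¬ (n+2+k = n+1) := by omega
        have h3 : 2*n+2 - (n+2+k) = n - k := by omega
        simp only [h1, h2, if_false, h3]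
      set m := n - (k+1) with hm
      have hm1 : n - k = m + 1 := by omega
      have hm2 : n + 1 - k = m + 2 := by omega
      have hm3 : n + 1 - (k+1) = m + 1 := by omega
      have ham : a (n - k) = a (m+1) := by rw [hm1]
      have recN : contNum a m = contNum a (m+2) - a (m+1) * contNum a (m+1) := by
        rw [contNum_rec]; ring
      have recD : contDen a m = contDen a (m+2) - a (m+1) * contDen a (m+1) := by
        rw [contDen_rec]; ring
      rw [hm1] at i2 i4
      rw [hm2] at i1 i3
      have ea : n+1+(k+1) = n+2+k := by omega
      have eb : n+2+(k+1) = (n+1+k)+2 := by omega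
      have ec : (n+1+k)+1 = n+2+k := by omega
      refine ⟨?_, ?_, ?_, ?_⟩
      · rw [ea, hm3]; exact i2
      · rw [eb, contNum_rec, ec, hbk, ham, i1, i2, recN, recD]; ring
      · rw [ea, hm3]; exact i4
      · rw [eb, contDen_rec, ec, hbk, ham, i3, i4, recN, recD]; ring
  obtain ⟨-, k2, -, k4⟩ := key n le_rfl
  rw [Nat.sub_self] at k2 k4
  have e2n : n + 2 + n = 2*n + 2 := by omega
  rw [e2n] at k2 k4
  have hP : contNum b (2*n+2) = s * A12 := by
    rw [k2]; simp [contNum, contDen]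
  have hQ : contDen b (2*n+2) = s * A22 := by
    rw [k4]; simp [contNum, contDen]
  constructor
  · rw [hP, hQ, hA22]; ring
  · intro hx hq0 hQ0
    have hs0 : s ≠ 0 := by
      intro h; rw [h, mul_zero] at hs; exact one_ne_zero hs.symm
    rw [hP, hQ, mul_div_mul_left _ _ hs0, hA12, hA22]
    field_simp
end

section
/- Let A be a positive integer and let b = -A + i or b = -A - i. Let (w_n)_{n≥0} be a sequence of positive integers with w₀ ≥ 5 and w_{n+1} ≥ 2·w_n + 1 for all n ≥ 0, and let (ε_n)_{n≥0} be any sequence with ε_n ∈ {-1, 1} for all n. Then for every m ≥ 0, (1/2)·|b|^{-w_m} ≤ |∑_{j=m}^∞ ε_j·b^{-w_j}| ≤ (3/2)·|b|^{-w_m}. -/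
/-!
Since `|b|² = A² + 1 ≥ 2` and the gaps `w_{n+1} - w_n ≥ w_n + 1 ≥ 6`, the moduli of the terms
of the series decay at least geometrically with ratio `|b|⁻⁶ ≤ 1/8`. Any ratio `q ≤ 1/3` already
makes the tail after the first term at most `q / (1 - q) ≤ 1/2` times the first term, whose
modulus is exactly `|b|^{-w_m}`.
-/

open Complex

section GeometricDomination

variable {E : Type*} [NormedAddCommGroup E] [CompleteSpace E] {f : ℕ → E} {q : ℝ}

theorem norm_tsum_sub_head_le (hq0 : 0 ≤ q) (hq1 : q < 1) (hf : ∀ j, ‖f j‖ ≤ ‖f 0‖ * q ^ j) :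
    ‖∑' j, f j - f 0‖ ≤ ‖f 0‖ * (q / (1 - q)) := by
  have hg := (hasSum_geometric_of_lt_one hq0 hq1).mul_left (‖f 0‖ * q)
  have hsum := Summable.of_norm_bounded ((summable_geometric_of_lt_one hq0 hq1).mul_left _) hf
  rw [hsum.tsum_eq_zero_add, add_sub_cancel_left]
  refine tsum_of_norm_bounded (g := fun j ↦ ‖f 0‖ * q ^ (j + 1)) ?_ (fun j ↦ hf (j + 1))
  simpa only [pow_succ', mul_assoc, div_eq_mul_inv] using hg

theorem norm_tsum_bounds_of_geometric (hq0 : 0 ≤ q) (hq : q ≤ 1 / 3)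
    (hf : ∀ j, ‖f j‖ ≤ ‖f 0‖ * q ^ j) :
    (1 / 2) * ‖f 0‖ ≤ ‖∑' j, f j‖ ∧ ‖∑' j, f j‖ ≤ (3 / 2) * ‖f 0‖ := by
  have hratio : q / (1 - q) ≤ 1 / 2 := by
    rw [div_le_iff₀ (by linarith)]; linarith
  have htail : ‖∑' j, f j - f 0‖ ≤ (1 / 2) * ‖f 0‖ :=
    (norm_tsum_sub_head_le hq0 (by linarith) hf).trans (by nlinarith [norm_nonneg (f 0)])
  have h := abs_le.1 ((abs_norm_sub_norm_le _ _).trans htail)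
  constructor <;> linarith [h.1, h.2]

end GeometricDomination

theorem sq_norm_eq_of_eq_neg_natCast_add_I_or_sub_I (A : ℕ) {b : ℂ}
    (hb : b = -(A : ℂ) + I ∨ b = -(A : ℂ) - I) : ‖b‖ ^ 2 = (A : ℝ) ^ 2 + 1 := by
  rw [Complex.sq_norm]
  rcases hb with rfl | rfl <;> simp [Complex.normSq_apply] <;> ring

theorem add_six_mul_le_of_two_mul_add_one_le {w : ℕ → ℕ} (hw0 : 5 ≤ w 0)
    (hw : ∀ n, 2 * w n + 1 ≤ w (n + 1)) (m j : ℕ) : w m + 6 * j ≤ w (j + m) := by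
  have hfive : ∀ n, 5 ≤ w n := fun n ↦ by
    induction n with
    | zero => exact hw0
    | succ k ih => have := hw k; omega
  induction j with
  | zero => simp
  | succ k ih =>
    have := hw (k + m)
    have := hfive (k + m)
    rw [Nat.add_right_comm]
    omega

theorem norm_intCast_mul_zpow_neg {e : ℤ} (he : e = 1 ∨ e = -1) (b : ℂ) (n : ℕ) :
    ‖(e : ℂ) * b ^ (-(n : ℤ))‖ = ‖b‖⁻¹ ^ n := by
  have : ‖(e : ℂ)‖ = 1 := by rcases he with rfl | rfl <;> simp
  rw [norm_mul, this, one_mul, norm_zpow, zpow_neg, zpow_natCast, inv_pow]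

theorem stmt7_general (A : ℕ) (hA : 0 < A) (b : ℂ)
    (hb : b = -(A : ℂ) + I ∨ b = -(A : ℂ) - I)
    (w : ℕ → ℕ) (hw0 : 5 ≤ w 0)
    (hw : ∀ n, 2 * w n + 1 ≤ w (n + 1))
    (ε : ℕ → ℤ) (hε : ∀ n, ε n = 1 ∨ ε n = -1) (m : ℕ) :
    (1 / 2) * ‖b‖ ^ (-(w m : ℤ))
        ≤ ‖∑' j : ℕ, (ε (j + m) : ℂ) * b ^ (-(w (j + m) : ℤ))‖ ∧
      ‖∑' j : ℕ, (ε (j + m) : ℂ) * b ^ (-(w (j + m) : ℤ))‖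
        ≤ (3 / 2) * ‖b‖ ^ (-(w m : ℤ)) := by
  have hsq : 2 ≤ ‖b‖ ^ 2 := by
    rw [sq_norm_eq_of_eq_neg_natCast_add_I_or_sub_I A hb]
    nlinarith [(Nat.one_le_cast (α := ℝ)).2 hA]
  set c := ‖b‖⁻¹
  have hc0 : 0 ≤ c := inv_nonneg.2 (norm_nonneg b)
  have hc1 : c ≤ 1 := inv_le_one_of_one_le₀ (by nlinarith [norm_nonneg b])
  have hc6 : c ^ 6 ≤ 1 / 3 := by
    have : c ^ 2 ≤ 1 / 2 := by
      rw [inv_pow]; exact inv_le_of_inv_le₀ (by norm_num) (by linarith)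
    nlinarith [pow_le_pow_left₀ (sq_nonneg c) this 3]
  have hterm (j : ℕ) := norm_intCast_mul_zpow_neg (hε (j + m)) b (w (j + m))
  have hhead : ‖b‖ ^ (-(w m : ℤ)) = ‖(ε (0 + m) : ℂ) * b ^ (-(w (0 + m) : ℤ))‖ := by
    rw [hterm, zero_add, zpow_neg, zpow_natCast, inv_pow]
  rw [hhead]
  refine norm_tsum_bounds_of_geometric (f := fun j ↦ (ε (j + m) : ℂ) * b ^ (-(w (j + m) : ℤ)))
    (by positivity) hc6 fun j ↦ ?_
  rw [hterm, hterm, ← pow_mul, ← pow_add]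
  exact pow_le_pow_of_le_one hc0 hc1
    (by simpa using add_six_mul_le_of_two_mul_add_one_le hw0 hw m j)

theorem stmt7 (A : ℕ) (hA : 0 < A) (b : ℂ)
    (hb : b = -(A : ℂ) + I ∨ b = -(A : ℂ) - I)
    (w : ℕ → ℕ) (hwpos : ∀ n, 0 < w n) (hw0 : 5 ≤ w 0)
    (hw : ∀ n, 2 * w n + 1 ≤ w (n + 1))
    (ε : ℕ → ℤ) (hε : ∀ n, ε n = 1 ∨ ε n = -1) (m : ℕ) :
    (1 / 2) * ‖b‖ ^ (-(w m : ℤ))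
        ≤ ‖∑' j : ℕ, (ε (j + m) : ℂ) * b ^ (-(w (j + m) : ℤ))‖ ∧
      ‖∑' j : ℕ, (ε (j + m) : ℂ) * b ^ (-(w (j + m) : ℤ))‖
        ≤ (3 / 2) * ‖b‖ ^ (-(w m : ℤ)) :=
  stmt7_general A hA b hb w hw0 hw ε hε m
end

section
/- Let k ≥ 1 be an integer and set m := 2^k. Then there exists a nonzero odd integer a ∈ ℤ such that a/m ∈ 𝔉 and every HCF partial quotient of a/m has absolute value at most 8; that is, for every n ≥ 0 with T^n(a/m) ≠ 0 one has |[1/T^n(a/m)]| ≤ 8. -/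
/-!
On the real line the Hurwitz algorithm is the nearest-integer continued fraction, so it suffices
to find, for every `k ≥ 1`, a word `x₁ … xₙ` of integers with `|xᵢ| ≤ 8` whose continued fraction
`1/(x₁ + 1/(x₂ + ⋯))` is a valid nearest-integer expansion with denominator `± 2^k`. Words all of
whose digits satisfy `3 ≤ |xᵢ|` are always valid. By the folding identity, if the word `w` has
denominator `q`, then `(-w reversed) t w` has denominator `± t q²`; folding with `t = 4` or `t = 8`
turns the exponent `j` into `2j + 2` or `2j + 3`. Starting from explicit words for the exponents
`2, 3, 4, 12, 13`, this reaches every `k ≥ 2` except `5`. The exponents `1` and `5` are covered by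
the words `-2` and `2, 8, -2`. The numerator is odd because the continuant matrix of a word has
determinant `±1`.
-/

open Complex

/-- The nearest Gaussian integer to a complex number, as a complex number. -/
noncomputable def nearestGaussian (z : ℂ) : ℂ :=
  (⌊z.re + 1 / 2⌋ : ℤ) + (⌊z.im + 1 / 2⌋ : ℤ) * I

/-- The fundamental domain `𝔉 = {z : [z] = 0}`. -/
noncomputable def Fdom : Set ℂ := {z : ℂ | nearestGaussian z = 0}

/-- The complex Gauss map on the fundamental domain. -/
noncomputable def gaussT (z : ℂ) : ℂ :=
  if z = 0 then 0 else z⁻¹ - nearestGaussian z⁻¹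

theorem nearestGaussian_zero : nearestGaussian 0 = 0 := by
  norm_num [nearestGaussian, Int.floor_eq_zero_iff]

theorem nearestGaussian_gaussianInt_add (g : GaussianInt) (z : ℂ) :
    nearestGaussian (g + z) = g + nearestGaussian z := by
  have hre : ((g : ℂ) + z).re + 1 / 2 = g.re + (z.re + 1 / 2) := by
    simp only [GaussianInt.toComplex_def, add_re, intCast_re, intCast_im, mul_re, I_re, I_im]
    ring
  have him : ((g : ℂ) + z).im + 1 / 2 = g.im + (z.im + 1 / 2) := by
    simp only [GaussianInt.toComplex_def, add_im, intCast_re, intCast_im, mul_im, I_re, I_im]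
    ring
  rw [nearestGaussian, nearestGaussian, hre, him, Int.floor_intCast_add, Int.floor_intCast_add,
    GaussianInt.toComplex_def]
  push_cast
  ring

theorem nearestGaussian_gaussianInt_add_of_mem_Fdom (g : GaussianInt) {y : ℂ} (hy : y ∈ Fdom) :
    nearestGaussian (g + y) = g := by
  rw [nearestGaussian_gaussianInt_add, hy, add_zero]

theorem gaussT_inv_gaussianInt_add {g : GaussianInt} {y : ℂ} (hy : y ∈ Fdom) :
    gaussT (g + y)⁻¹ = y := by
  by_cases h : (g : ℂ) + y = 0
  · have hg : (g : ℂ) = 0 := by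
      rw [← nearestGaussian_gaussianInt_add_of_mem_Fdom g hy, h, nearestGaussian_zero]
    obtain rfl : y = 0 := by simpa [hg] using h
    rw [hg, add_zero, inv_zero, gaussT, if_pos rfl]
  · rw [gaussT, if_neg (inv_ne_zero h), inv_inv, nearestGaussian_gaussianInt_add_of_mem_Fdom g hy,
      add_sub_cancel_left]

theorem ofReal_mem_Fdom_iff (r : ℝ) : (r : ℂ) ∈ Fdom ↔ -(1 / 2) ≤ r ∧ r < 1 / 2 := by
  have h0 : ⌊(0 : ℝ) + 1 / 2⌋ = 0 := by norm_num
  simp only [Fdom, Set.mem_ofPred_eq, nearestGaussian, ofReal_re, ofReal_im, h0, Int.cast_zero,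
    zero_mul, add_zero, Int.cast_eq_zero, Int.floor_eq_zero_iff, Set.mem_Ico]
  constructor <;> rintro ⟨h1, h2⟩ <;> constructor <;> linarith

theorem inv_mem_Fdom_of_two_lt_or_le_neg_two {r : ℝ} (h : 2 < r ∨ r ≤ -2) :
    ((r⁻¹ : ℝ) : ℂ) ∈ Fdom := by
  rw [ofReal_mem_Fdom_iff]
  rcases h with h | h
  · have hr : 0 < r := by linarith
    have := (inv_lt_inv₀ hr two_pos).2 h
    constructor <;> linarith [inv_pos.2 hr]
  · have hr : r < 0 := by linarith
    have := (inv_le_inv_of_neg (by norm_num : (-2 : ℝ) < 0) hr).2 h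
    constructor <;> linarith [inv_lt_zero.2 hr]

def HasBoundedQuotients (B : ℝ) (z : ℂ) : Prop :=
  ∀ n : ℕ, gaussT^[n] z ≠ 0 → ‖nearestGaussian (gaussT^[n] z)⁻¹‖ ≤ B

theorem hasBoundedQuotients_zero (B : ℝ) : HasBoundedQuotients B 0 := by
  intro n hn
  exact absurd (Function.iterate_fixed (by simp [gaussT]) n) hn

theorem HasBoundedQuotients.of_gaussT {B : ℝ} {w : ℂ}
    (hq : ‖nearestGaussian w⁻¹‖ ≤ B) (h : HasBoundedQuotients B (gaussT w)) :
    HasBoundedQuotients B w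
  | 0, _ => hq
  | n + 1, hn => by
    rw [Function.iterate_succ_apply] at hn ⊢
    exact h n hn

noncomputable def cfValue : List ℤ → ℝ
  | [] => 0
  | x :: l => ((x : ℝ) + cfValue l)⁻¹

/-- The side condition says exactly that `(x + cfValue l)⁻¹ ∈ [-1/2, 1/2)`, i.e. that `x` is the
nearest integer to `(cfValue (x :: l))⁻¹`. -/
def Admissible (B : ℤ) : List ℤ → Prop
  | [] => True
  | x :: l => Admissible B l ∧ |x| ≤ B ∧ (2 < x + cfValue l ∨ x + cfValue l ≤ -2)

theorem Admissible.cfValue_mem_Fdom {B : ℤ} : ∀ {l : List ℤ}, Admissible B l →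
    (cfValue l : ℂ) ∈ Fdom
  | [], _ => by rw [cfValue, ofReal_zero]; exact nearestGaussian_zero
  | _ :: _, ⟨_, _, h⟩ => inv_mem_Fdom_of_two_lt_or_le_neg_two h

theorem Admissible.hasBoundedQuotients {B : ℤ} : ∀ {l : List ℤ}, Admissible B l →
    HasBoundedQuotients B (cfValue l)
  | [], _ => by rw [cfValue, ofReal_zero]; exact hasBoundedQuotients_zero B
  | x :: l, ⟨hl, hx, _⟩ => by
    have hy := hl.cfValue_mem_Fdom
    have hw : (cfValue (x :: l) : ℂ) = ((x : GaussianInt) + (cfValue l : ℂ))⁻¹ := by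
      simp [cfValue]
    rw [hw]
    refine HasBoundedQuotients.of_gaussT ?_ ?_
    · rw [inv_inv, nearestGaussian_gaussianInt_add_of_mem_Fdom _ hy, map_intCast, norm_intCast]
      exact_mod_cast hx
    · rw [gaussT_inv_gaussianInt_add hy]
      exact hl.hasBoundedQuotients

theorem admissible_of_forall_mem {B : ℤ} : ∀ {l : List ℤ}, (∀ x ∈ l, 3 ≤ |x| ∧ |x| ≤ B) →
    Admissible B l
  | [], _ => trivial
  | x :: l, h => by
    have hl : Admissible B l := admissible_of_forall_mem fun y hy ↦ h y (List.mem_cons_of_mem x hy)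
    obtain ⟨h3, hB⟩ := h x List.mem_cons_self
    obtain ⟨hy₁, hy₂⟩ := (ofReal_mem_Fdom_iff _).1 hl.cfValue_mem_Fdom
    refine ⟨hl, hB, ?_⟩
    rcases le_abs'.1 h3 with hx | hx
    · have : (x : ℝ) ≤ -3 := by exact_mod_cast hx
      right; linarith
    · have : (3 : ℝ) ≤ x := by exact_mod_cast hx
      left; linarith

def cfMatrix (x : ℤ) : Matrix (Fin 2) (Fin 2) ℤ := !![0, 1; 1, x]

def wordMatrix (l : List ℤ) : Matrix (Fin 2) (Fin 2) ℤ := (l.map cfMatrix).prod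

@[simp]
theorem wordMatrix_nil : wordMatrix [] = 1 := rfl

@[simp]
theorem wordMatrix_cons (x : ℤ) (l : List ℤ) :
    wordMatrix (x :: l) = cfMatrix x * wordMatrix l := by
  simp [wordMatrix]

theorem wordMatrix_append (l₁ l₂ : List ℤ) :
    wordMatrix (l₁ ++ l₂) = wordMatrix l₁ * wordMatrix l₂ := by
  simp [wordMatrix]

theorem det_wordMatrix (l : List ℤ) : (wordMatrix l).det = (-1) ^ l.length := by
  induction l with
  | nil => simp
  | cons x l ih =>
    rw [wordMatrix_cons, Matrix.det_mul, ih, cfMatrix, Matrix.det_fin_two_of, List.length_cons,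
      pow_succ]
    ring

theorem wordMatrix_reverse_map_neg (l : List ℤ) :
    wordMatrix (l.map Neg.neg).reverse = (-1) ^ l.length •
      !![wordMatrix l 0 0, -wordMatrix l 1 0; -wordMatrix l 0 1, wordMatrix l 1 1] := by
  induction l with
  | nil =>
    ext i j
    fin_cases i <;> fin_cases j <;> rfl
  | cons x l ih =>
    rw [List.map_cons, List.reverse_cons, wordMatrix_append, ih]
    ext i j
    fin_cases i <;> fin_cases j <;>
      simp [wordMatrix, cfMatrix, Matrix.mul_apply, Fin.sum_univ_two, pow_succ] <;> ring

theorem odd_wordMatrix_zero_one_of_even (l : List ℤ) (h : Even (wordMatrix l 1 1)) :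
    Odd (wordMatrix l 0 1) := by
  have hdet := det_wordMatrix l
  rw [Matrix.det_fin_two] at hdet
  by_contra hp
  rw [Int.not_odd_iff_even] at hp
  have : Even ((-1 : ℤ) ^ l.length) := hdet ▸ (h.mul_left _).sub (hp.mul_right _)
  exact Int.not_even_iff_odd.2 (Odd.pow (by decide)) this

/-- The word of the folding lemma for continued fractions. -/
def cfFold (l : List ℤ) (t : ℤ) : List ℤ := (l.map Neg.neg).reverse ++ t :: l

theorem wordMatrix_cfFold_one_one (l : List ℤ) (t : ℤ) :
    wordMatrix (cfFold l t) 1 1 = (-1) ^ l.length * t * wordMatrix l 1 1 ^ 2 := by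
  rw [cfFold, wordMatrix_append, wordMatrix_reverse_map_neg, wordMatrix_cons]
  simp only [Matrix.smul_of, Matrix.smul_cons, Int.zsmul_eq_mul, mul_neg, Matrix.smul_empty,
    cfMatrix, Matrix.cons_mul, Nat.succ_eq_add_one, Nat.reduceAdd, Matrix.empty_mul,
    Equiv.symm_apply_apply, Matrix.mul_apply, Matrix.of_apply, Matrix.cons_val',
    Matrix.cons_val_fin_one, Matrix.cons_val_one, Matrix.vecMul, dotProduct, Fin.sum_univ_two,
    Matrix.cons_val_zero, zero_mul, one_mul, zero_add, neg_mul]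
  ring

theorem Admissible.cfValue_mul_wordMatrix {B : ℤ} : ∀ {l : List ℤ}, Admissible B l →
    cfValue l * wordMatrix l 1 1 = wordMatrix l 0 1
  | [], _ => by simp [cfValue]
  | x :: l, ⟨hl, _, h⟩ => by
    have hne : (x : ℝ) + cfValue l ≠ 0 := by rcases h with h | h <;> intro h0 <;> linarith
    have ih := hl.cfValue_mul_wordMatrix
    simp only [cfValue, wordMatrix_cons, cfMatrix, Matrix.mul_apply, Matrix.of_apply,
      Matrix.cons_val', Matrix.cons_val_fin_one, Matrix.cons_val_one, Fin.sum_univ_two,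
      Matrix.cons_val_zero, one_mul, Int.cast_add, Int.cast_mul, zero_mul, zero_add]
    rw [← ih, inv_mul_eq_iff_eq_mul₀ hne]
    ring

theorem exists_large_digit_word {k : ℕ} (hk : 2 ≤ k) (hk5 : k ≠ 5) :
    ∃ l : List ℤ, (∀ x ∈ l, 3 ≤ |x| ∧ |x| ≤ 8) ∧ (wordMatrix l 1 1).natAbs = 2 ^ k := by
  induction k using Nat.strong_induction_on with
  | _ k ih =>
  by_cases hbase : k = 2 ∨ k = 3 ∨ k = 4 ∨ k = 12 ∨ k = 13
  · rcases hbase with rfl | rfl | rfl | rfl | rfl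
    · exact ⟨[4], by decide, by decide⟩
    · exact ⟨[8], by decide, by decide⟩
    · exact ⟨[3, 5], by decide, by decide⟩
    · exact ⟨[-8, -6, 3, 4, -7], by decide, by decide⟩
    · exact ⟨[-8, 7, -7, -4, -5], by decide, by decide⟩
  · obtain ⟨l, hl, hq⟩ := ih ((k - 2) / 2) (by omega) (by omega) (by omega)
    set c := k - 2 * ((k - 2) / 2)
    have hc : c = 2 ∨ c = 3 := by omega
    have ht : 3 ≤ |(2 : ℤ) ^ c| ∧ |(2 : ℤ) ^ c| ≤ 8 := by rcases hc with hc | hc <;> simp [hc]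
    refine ⟨cfFold l (2 ^ c), ?_, ?_⟩
    · intro x hx
      simp only [cfFold, List.mem_append, List.mem_reverse, List.mem_map, List.mem_cons] at hx
      rcases hx with ⟨y, hy, rfl⟩ | rfl | hx
      · simpa using hl y hy
      · exact ht
      · exact hl x hx
    · simp only [wordMatrix_cfFold_one_one, Int.natAbs_mul, Int.natAbs_pow, Int.natAbs_neg,
        Int.natAbs_one, one_pow, one_mul, hq]
      rw [← pow_mul, show Int.natAbs 2 = 2 from rfl, ← pow_add]
      congr 1
      omega

theorem exists_admissible_word {k : ℕ} (hk : 1 ≤ k) :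
    ∃ l : List ℤ, Admissible 8 l ∧ (wordMatrix l 1 1).natAbs = 2 ^ k := by
  by_cases hk1 : k = 1
  · subst hk1
    exact ⟨[-2], by norm_num [Admissible, cfValue], by decide⟩
  by_cases hk5 : k = 5
  · subst hk5
    exact ⟨[2, 8, -2], by norm_num [Admissible, cfValue], by decide⟩
  obtain ⟨l, hl, hq⟩ := exists_large_digit_word (by omega) hk5
  exact ⟨l, admissible_of_forall_mem hl, hq⟩

theorem stmt11 (k : ℕ) (hk : 1 ≤ k) :
    ∃ a : ℤ, a ≠ 0 ∧ Odd a ∧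
      ((a : ℂ) / ((2 : ℂ) ^ k)) ∈ Fdom ∧
      ∀ n : ℕ, gaussT^[n] ((a : ℂ) / ((2 : ℂ) ^ k)) ≠ 0 →
        ‖nearestGaussian (gaussT^[n] ((a : ℂ) / ((2 : ℂ) ^ k)))⁻¹‖ ≤ 8 := by
  obtain ⟨l, hl, hq⟩ := exists_admissible_word hk
  have hp : Odd (wordMatrix l 0 1) := odd_wordMatrix_zero_one_of_even l <| by
    rw [← Int.natAbs_even, hq]
    exact (Nat.even_pow' (by omega)).2 even_two
  have hv : (cfValue l : ℂ) * wordMatrix l 1 1 = wordMatrix l 0 1 := by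
    exact_mod_cast hl.cfValue_mul_wordMatrix
  obtain ⟨a, ha, hval⟩ : ∃ a : ℤ, Odd a ∧ (a : ℂ) / 2 ^ k = cfValue l := by
    rcases Int.natAbs_eq (wordMatrix l 1 1) with h | h <;> rw [hq] at h <;> rw [h] at hv <;>
      push_cast at hv
    · exact ⟨_, hp, by rw [← hv]; field_simp⟩
    · exact ⟨_, hp.neg, by rw [Int.cast_neg, ← hv]; field_simp⟩
  refine ⟨a, fun h ↦ Int.not_even_iff_odd.2 ha (h ▸ Even.zero), ha, ?_⟩
  rw [hval]
  exact ⟨hl.cfValue_mem_Fdom, by exact_mod_cast hl.hasBoundedQuotients⟩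
end
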